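/- arXiv:1701.06383 — 2 statements merged into one kernel-verified Lean document; each statement's English description precedes it below -/
import Mathlib

section
/- Let K be a field, A and B algebras over K with A unital, and φ : M₂(A) → B an arbitrary function. Then φ is a K-algebra homomorphism if and only if φ is a semigroup homomorphism (φ(xy) = φ(x)φ(y) for all x, y) whose restriction to the K-linear subspace K·e₁₁ + K·e₂₂ of M₂(A) is K-linear. -/
/-!
Write `E i j a` for `single i j a`. Sandwiching `φ x` between two copies of
`φ 1 = ∑ φ (E i i 1)` splits it as `∑ φ (E i j (x i j))`, and
`φ (E i j a) = φ (E i p 1) * φ (E p q a) * φ (E q j 1)` moves every position to a single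
off-diagonal position `p ≠ q`. There `E p q (a + b) = (E p p 1 + E p q a) * (E p q b + E q q 1)`,
and both factors are sums over distinct positions, on which `φ` splits by the first step;
so `φ` is additive. Homogeneity follows from `c • x = (c • 1) * x`.
-/

namespace Matrix

variable {n A B : Type*} [Fintype n] [DecidableEq n] [Ring A] [NonUnitalRing B]
  {φ : Matrix n n A → B}

theorem map_eq_sum_map_single (hmul : ∀ x y, φ (x * y) = φ x * φ y)
    (hone : φ 1 = ∑ i, φ (single i i 1)) (x : Matrix n n A) :
    φ x = ∑ ij : n × n, φ (single ij.1 ij.2 (x ij.1 ij.2)) := by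
  rw [Fintype.sum_prod_type]
  calc φ x = φ 1 * φ x * φ 1 := by rw [← hmul, ← hmul, one_mul, mul_one]
    _ = ∑ i, ∑ j, φ (single i i 1 * x * single j j 1) := by
      simp only [hone, Finset.sum_mul, Finset.mul_sum, hmul]
      exact Finset.sum_comm
    _ = ∑ i, ∑ j, φ (single i j (x i j)) := by
      simp only [single_mul_mul_single, one_mul, mul_one]

theorem map_single_eq_mul (hmul : ∀ x y, φ (x * y) = φ x * φ y) (i j p q : n) (a : A) :
    φ (single i j a) = φ (single i p 1) * φ (single p q a) * φ (single q j 1) := by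
  rw [← hmul, ← hmul, single_mul_single_same, single_mul_single_same, one_mul, mul_one]

theorem map_single_add_single (hmul : ∀ x y, φ (x * y) = φ x * φ y)
    (hone : φ 1 = ∑ i, φ (single i i 1)) (hzero : φ 0 = 0) {i j k l : n}
    (hne : (i, j) ≠ (k, l)) (a b : A) :
    φ (single i j a + single k l b) = φ (single i j a) + φ (single k l b) := by
  rw [map_eq_sum_map_single hmul hone,
    Fintype.sum_eq_add (i, j) (k, l) hne]
  · have hik : ¬(i = k ∧ j = l) := fun h => hne (by rw [h.1, h.2])
    have hki : ¬(k = i ∧ l = j) := fun h => hne (by rw [h.1, h.2])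
    simp [hik, hki]
  · rintro ⟨i', j'⟩ hij
    have hi : ¬(i = i' ∧ j = j') := fun h => hij.1 (by rw [h.1, h.2])
    have hk : ¬(k = i' ∧ l = j') := fun h => hij.2 (by rw [h.1, h.2])
    simp [hi, hk, hzero]

theorem map_single_add_of_ne (hmul : ∀ x y, φ (x * y) = φ x * φ y)
    (hone : φ 1 = ∑ i, φ (single i i 1)) (hzero : φ 0 = 0) {p q : n} (hpq : p ≠ q)
    (a b : A) : φ (single p q (a + b)) = φ (single p q a) + φ (single p q b) :=
  calc φ (single p q (a + b))
      = φ ((single p p 1 + single p q a) * (single p q b + single q q 1)) := by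
        simp [add_mul, mul_add, hpq, hpq.symm, single_add, add_comm]
    _ = (φ (single p p 1) + φ (single p q a)) * (φ (single p q b) + φ (single q q 1)) := by
        rw [hmul, map_single_add_single hmul hone hzero (by simp [hpq]),
          map_single_add_single hmul hone hzero (by simp [hpq])]
    _ = φ (single p q a) + φ (single p q b) := by
        simp only [add_mul, mul_add, ← hmul]
        simp [hpq, hpq.symm, hzero, add_comm]

theorem map_single_add [Nontrivial n] (hmul : ∀ x y, φ (x * y) = φ x * φ y)
    (hone : φ 1 = ∑ i, φ (single i i 1)) (hzero : φ 0 = 0) (i j : n) (a b : A) :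
    φ (single i j (a + b)) = φ (single i j a) + φ (single i j b) := by
  obtain ⟨p, q, hpq⟩ := exists_pair_ne n
  rw [map_single_eq_mul hmul i j p q, map_single_add_of_ne hmul hone hzero hpq, mul_add,
    add_mul, ← map_single_eq_mul hmul, ← map_single_eq_mul hmul]

theorem map_add_of_map_mul [Nontrivial n] (hmul : ∀ x y, φ (x * y) = φ x * φ y)
    (hone : φ 1 = ∑ i, φ (single i i 1)) (hzero : φ 0 = 0) (x y : Matrix n n A) :
    φ (x + y) = φ x + φ y := by
  rw [map_eq_sum_map_single hmul hone (x + y), map_eq_sum_map_single hmul hone x,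
    map_eq_sum_map_single hmul hone y, ← Finset.sum_add_distrib]
  exact Finset.sum_congr rfl fun ij _ => map_single_add hmul hone hzero _ _ _ _

end Matrix

theorem map_smul_of_map_smul_one {K M N : Type*} [MulOneClass M] [SMul K M]
    [IsScalarTower K M M] [Mul N] [SMul K N] [IsScalarTower K N N] {φ : M → N}
    (hmul : ∀ x y, φ (x * y) = φ x * φ y) (hsmul_one : ∀ c : K, φ (c • 1) = c • φ 1)
    (c : K) (x : M) : φ (c • x) = c • φ x :=
  calc φ (c • x) = φ ((c • 1) * x) := by rw [smul_mul_assoc, one_mul]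
    _ = c • φ (1 * x) := by rw [hmul, hsmul_one, smul_mul_assoc, ← hmul]
    _ = c • φ x := by rw [one_mul]

theorem stmt_2_general {K A B : Type*} [Field K] [Ring A] [Algebra K A]
    [NonUnitalRing B] [Module K B] [IsScalarTower K B B]
    (φ : Matrix (Fin 2) (Fin 2) A → B) :
    ((∀ x y, φ (x + y) = φ x + φ y) ∧ (∀ x y, φ (x * y) = φ x * φ y) ∧
        (∀ (c : K) (x), φ (c • x) = c • φ x)) ↔
      ((∀ x y, φ (x * y) = φ x * φ y) ∧
        (∀ lam mu lam' mu' : K,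
          φ ((lam • Matrix.single 0 0 (1 : A) +
                mu • Matrix.single 1 1 (1 : A)) +
              (lam' • Matrix.single 0 0 (1 : A) +
                mu' • Matrix.single 1 1 (1 : A))) =
            φ (lam • Matrix.single 0 0 (1 : A) +
                mu • Matrix.single 1 1 (1 : A)) +
            φ (lam' • Matrix.single 0 0 (1 : A) +
                mu' • Matrix.single 1 1 (1 : A))) ∧
        (∀ c lam mu : K,
          φ (c • (lam • Matrix.single 0 0 (1 : A) +
                mu • Matrix.single 1 1 (1 : A))) =
            c • φ (lam • Matrix.single 0 0 (1 : A) +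
                mu • Matrix.single 1 1 (1 : A)))) := by
  constructor
  · rintro ⟨hadd, hmul, hsmul⟩
    exact ⟨hmul, fun _ _ _ _ => hadd _ _, fun _ _ _ => hsmul _ _⟩
  · rintro ⟨hmul, hadd, hsmul⟩
    have hzero : φ 0 = 0 := by simpa using hsmul 0 1 1
    have hone : φ 1 = ∑ i, φ (Matrix.single i i 1) := by
      rw [← Matrix.sum_single_one, Fin.sum_univ_two, Fin.sum_univ_two]
      simpa using hadd 1 0 0 1
    have hsmul_one : ∀ c : K, φ (c • 1) = c • φ 1 := by
      intro c
      rw [← Matrix.sum_single_one, Fin.sum_univ_two]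
      simpa using hsmul c 1 1
    exact ⟨Matrix.map_add_of_map_mul hmul hone hzero, hmul,
      map_smul_of_map_smul_one hmul hsmul_one⟩

/-- Let `K` be a field, `A` and `B` algebras over `K` with
`A` unital, and `φ : M₂(A) → B` an arbitrary function.  Then `φ` is a
`K`-algebra homomorphism (additive, multiplicative and `K`-homogeneous) if
and only if `φ` is a semigroup homomorphism whose restriction to the
subspace `K·e₁₁ + K·e₂₂` of `M₂(A)` is `K`-linear. -/
theorem stmt_2 {K A B : Type*} [Field K] [Ring A] [Algebra K A]
    [NonUnitalRing B] [Module K B] [SMulCommClass K B B] [IsScalarTower K B B]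
    (φ : Matrix (Fin 2) (Fin 2) A → B) :
    ((∀ x y, φ (x + y) = φ x + φ y) ∧ (∀ x y, φ (x * y) = φ x * φ y) ∧
        (∀ (c : K) (x), φ (c • x) = c • φ x)) ↔
      ((∀ x y, φ (x * y) = φ x * φ y) ∧
        (∀ lam mu lam' mu' : K,
          φ ((lam • Matrix.single 0 0 (1 : A) +
                mu • Matrix.single 1 1 (1 : A)) +
              (lam' • Matrix.single 0 0 (1 : A) +
                mu' • Matrix.single 1 1 (1 : A))) =
            φ (lam • Matrix.single 0 0 (1 : A) +
                mu • Matrix.single 1 1 (1 : A)) +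
            φ (lam' • Matrix.single 0 0 (1 : A) +
                mu' • Matrix.single 1 1 (1 : A))) ∧
        (∀ c lam mu : K,
          φ (c • (lam • Matrix.single 0 0 (1 : A) +
                mu • Matrix.single 1 1 (1 : A))) =
            c • φ (lam • Matrix.single 0 0 (1 : A) +
                mu • Matrix.single 1 1 (1 : A)))) :=
  stmt_2_general φ
end

section
/- Let A be a unital ring, B a ring, and φ : M₂(A) → B a multiplicative map (φ(xy) = φ(x)φ(y) for all x, y ∈ M₂(A)) satisfying φ(1) = φ(e₁₁) + φ(e₂₂). Then for all a, b ∈ A and all 1 ≤ i, j ≤ 2, φ(a ⊗ e_{ij} + b ⊗ e_{ij}) = φ(a ⊗ e_{ij}) + φ(b ⊗ e_{ij}), and moreover φ(x) = Σ_{i,j=1}^{2} φ(x_{ij} ⊗ e_{ij}) for every matrix x = (x_{ij}) ∈ M₂(A). -/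
/-!
Compressing by the diagonal matrix units gives `φ(e_kk) φ(x) φ(e_ll) = φ(x_kl ⊗ e_kl)`,
so expanding `φ(x) = φ(1) φ(x) φ(1)` with `φ(1) = φ(e₁₁) + φ(e₂₂)` decomposes `φ(x)` along
the entries of `x`. In particular `φ` is additive on matrices with disjoint supports, and the
factorisation `(a + b) ⊗ e_ij = (e_ii + b ⊗ e_ij) (a ⊗ e_ij + e_jj)` for `i ≠ j` turns this
into additivity on an off-diagonal slot. A diagonal slot reduces to an off-diagonal one
through `c ⊗ e_ii = (c ⊗ e_ij) e_ji`.
-/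

open Matrix

theorem Matrix.single_apply_eq_zero_or_of_ne {n α : Type*} [DecidableEq n] [Zero α]
    {i j k l : n} (h : (i, j) ≠ (k, l)) (a b : α) (p q : n) :
    single i j a p q = 0 ∨ single k l b p q = 0 := by
  simp only [single_apply]
  grind

section MultiplicativeMap

variable {A B : Type*} [Semiring A] [Ring B] {φ : Matrix (Fin 2) (Fin 2) A → B}

theorem map_zero_of_map_one_eq_add (hmul : ∀ x y, φ (x * y) = φ x * φ y)
    (hone : φ 1 = φ (single 0 0 1) + φ (single 1 1 1)) : φ 0 = 0 := by
  have h : φ 0 = φ 0 + φ 0 := calc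
    φ 0 = φ 0 * φ 1 := by rw [← hmul, zero_mul]
    _ = φ (0 * single 0 0 1) + φ (0 * single 1 1 1) := by rw [hone, mul_add, hmul, hmul]
    _ = φ 0 + φ 0 := by rw [zero_mul, zero_mul]
  exact left_eq_add.mp h

theorem map_eq_sum_map_single (hmul : ∀ x y, φ (x * y) = φ x * φ y)
    (hone : φ 1 = φ (single 0 0 1) + φ (single 1 1 1)) (x : Matrix (Fin 2) (Fin 2) A) :
    φ x = ∑ i, ∑ j, φ (single i j (x i j)) := by
  have hone' : φ 1 = ∑ k, φ (single k k 1) := by rw [hone, Fin.sum_univ_two]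
  calc φ x = φ 1 * φ x * φ 1 := by rw [← hmul, ← hmul, one_mul, mul_one]
    _ = ∑ i, ∑ j, φ (single i i 1) * φ x * φ (single j j 1) := by
      rw [hone', Finset.sum_mul, Finset.sum_mul]
      simp_rw [Finset.mul_sum]
    _ = ∑ i, ∑ j, φ (single i j (x i j)) := by
      simp only [← hmul, single_mul_mul_single, one_mul, mul_one]

theorem map_add_of_disjoint (hmul : ∀ x y, φ (x * y) = φ x * φ y)
    (hone : φ 1 = φ (single 0 0 1) + φ (single 1 1 1)) {x y : Matrix (Fin 2) (Fin 2) A}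
    (hxy : ∀ i j, x i j = 0 ∨ y i j = 0) : φ (x + y) = φ x + φ y := by
  have h0 := map_zero_of_map_one_eq_add hmul hone
  have hentry : ∀ i j, φ (single i j ((x + y) i j)) =
      φ (single i j (x i j)) + φ (single i j (y i j)) := by
    intro i j
    rcases hxy i j with h | h <;> simp [h, h0]
  rw [map_eq_sum_map_single hmul hone (x + y), map_eq_sum_map_single hmul hone x,
    map_eq_sum_map_single hmul hone y]
  simp only [hentry, Finset.sum_add_distrib]

theorem map_single_add_of_ne (hmul : ∀ x y, φ (x * y) = φ x * φ y)
    (hone : φ 1 = φ (single 0 0 1) + φ (single 1 1 1)) {i j : Fin 2} (hij : i ≠ j) (a b : A) :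
    φ (single i j (a + b)) = φ (single i j a) + φ (single i j b) := by
  have h0 := map_zero_of_map_one_eq_add hmul hone
  have hfac : single i j (a + b) =
      (single i i 1 + single i j b) * (single i j a + single j j 1) := by
    simp [add_mul, mul_add, single_add, single_mul_single_of_ne _ _ _ _ hij,
      single_mul_single_of_ne _ _ _ _ hij.symm]
  have hleft : φ (single i i 1 + single i j b) = φ (single i i 1) + φ (single i j b) :=
    map_add_of_disjoint hmul hone (single_apply_eq_zero_or_of_ne (by simp [hij]) _ _)
  have hright : φ (single i j a + single j j 1) = φ (single i j a) + φ (single j j 1) :=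
    map_add_of_disjoint hmul hone (single_apply_eq_zero_or_of_ne (by simp [hij]) _ _)
  rw [hfac, hmul, hleft, hright]
  simp only [add_mul, mul_add, ← hmul, single_mul_single_same, one_mul, mul_one, h0,
    single_mul_single_of_ne _ _ _ _ hij, single_mul_single_of_ne _ _ _ _ hij.symm]
  abel

theorem map_single_add (hmul : ∀ x y, φ (x * y) = φ x * φ y)
    (hone : φ 1 = φ (single 0 0 1) + φ (single 1 1 1)) (i j : Fin 2) (a b : A) :
    φ (single i j (a + b)) = φ (single i j a) + φ (single i j b) := by
  rcases ne_or_eq i j with hij | rfl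
  · exact map_single_add_of_ne hmul hone hij a b
  obtain ⟨k, hk⟩ := exists_ne i
  have hfac : ∀ c : A, single i i c = single i k c * single k i 1 := by simp
  rw [hfac (a + b), hmul, map_single_add_of_ne hmul hone hk.symm, add_mul, ← hmul, ← hmul,
    ← hfac, ← hfac]

end MultiplicativeMap

/-- Let `A` be a unital ring, `B` a ring, and
`φ : M₂(A) → B` a multiplicative map satisfying `φ(1) = φ(e₁₁) + φ(e₂₂)`.
Then `φ` is additive on each entry slot, i.e.
`φ(a ⊗ e_{ij} + b ⊗ e_{ij}) = φ(a ⊗ e_{ij}) + φ(b ⊗ e_{ij})`, and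
`φ(x) = Σ_{i,j} φ(x_{ij} ⊗ e_{ij})` for every matrix `x`. -/
theorem stmt_15 {A B : Type*} [Ring A] [Ring B]
    (φ : Matrix (Fin 2) (Fin 2) A → B)
    (hmul : ∀ x y, φ (x * y) = φ x * φ y)
    (hone : φ 1 = φ (Matrix.single 0 0 (1 : A)) +
      φ (Matrix.single 1 1 (1 : A))) :
    (∀ (a b : A) (i j : Fin 2),
        φ (Matrix.single i j a + Matrix.single i j b) =
          φ (Matrix.single i j a) + φ (Matrix.single i j b)) ∧
      (∀ x : Matrix (Fin 2) (Fin 2) A,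
        φ x = ∑ i : Fin 2, ∑ j : Fin 2,
          φ (Matrix.single i j (x i j))) :=
  ⟨fun a b i j => by rw [← single_add]; exact map_single_add hmul hone i j a b,
    map_eq_sum_map_single hmul hone⟩
end
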